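/- arXiv:math/0206077 — 4 statements merged into one kernel-verified Lean document; each statement's English description precedes it below -/
import Mathlib

section
/- For every integer n ≥ 2 and every pair of permutations u, v ∈ S_n, there exists a directed path from u to v in the quantum Bruhat graph Γ_n. -/
/-!
Right multiplication by an adjacent transposition `s_i = s_{i,i+1}` changes the number of
inversions by exactly one, so `u → u s_i` is always an edge of `Γ_n`: a Bruhat cover if the
length goes up, and a quantum edge (for which `2(j - i) = 2`) if it goes down. Since the
adjacent transpositions generate `S_n` as a monoid, every `v = u g` is reached from `u`.
-/

open Equiv

/-- Number of inversions of a permutation of `Fin n` (its Coxeter length). -/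
def len (n : ℕ) (w : Equiv.Perm (Fin n)) : ℕ :=
  (Finset.univ.filter (fun p : Fin n × Fin n => p.1 < p.2 ∧ w p.2 < w p.1)).card

/-- The endpoint of the edge labeled `p = (i, j)` starting at `u`: right
multiplication by the transposition `s_{ij}`. -/
def step (n : ℕ) (u : Equiv.Perm (Fin n)) (p : Fin n × Fin n) : Equiv.Perm (Fin n) :=
  u * Equiv.swap p.1 p.2

/-- `u → u·s_{ij}` is an edge of the quantum Bruhat graph `Γ_n`:
either `ℓ(u s_{ij}) = ℓ(u) + 1`, or `ℓ(u s_{ij}) = ℓ(u) + 1 - 2(j - i)`. -/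
def isQBEdge (n : ℕ) (u : Equiv.Perm (Fin n)) (p : Fin n × Fin n) : Prop :=
  p.1 < p.2 ∧
    (len n (step n u p) = len n u + 1 ∨
     len n (step n u p) + 2 * ((p.2 : ℕ) - (p.1 : ℕ)) = len n u + 1)

/-- The weight in `ℤ^{n-1}` of the edge labeled `p = (i,j)` starting at `u`:
`0` for a Bruhat cover, and `e_i + e_{i+1} + ⋯ + e_{j-1}` for a quantum edge.
(Here coordinates of `Fin (n-1)` are `0`-based: index `k` is the paper's `q_{k+1}`.) -/
def edgeWeight (n : ℕ) (u : Equiv.Perm (Fin n)) (p : Fin n × Fin n) : Fin (n - 1) → ℤ :=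
  if len n (step n u p) = len n u + 1 then 0
  else fun k => if (p.1 : ℕ) ≤ (k : ℕ) ∧ (k : ℕ) < (p.2 : ℕ) then 1 else 0

/-- `isPath n u L v` : the list of labels `L` encodes a directed path from `u` to `v`
in the quantum Bruhat graph `Γ_n`. -/
def isPath (n : ℕ) : Equiv.Perm (Fin n) → List (Fin n × Fin n) → Equiv.Perm (Fin n) → Prop
  | u, [], v => u = v
  | u, p :: ps, v => isQBEdge n u p ∧ isPath n (step n u p) ps v

/-- The weight of a directed path: the sum in `ℤ^{n-1}` of the weights of its edges. -/
def pathWeight (n : ℕ) : Equiv.Perm (Fin n) → List (Fin n × Fin n) → (Fin (n - 1) → ℤ)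
  | _, [] => 0
  | u, p :: ps => edgeWeight n u p + pathWeight n (step n u p) ps

/-- Every edge of the path is length-increasing (a Bruhat cover). -/
def allUp (n : ℕ) : Equiv.Perm (Fin n) → List (Fin n × Fin n) → Prop
  | _, [] => True
  | u, p :: ps => len n (step n u p) = len n u + 1 ∧ allUp n (step n u p) ps

/-- A path with labels `(a_1,b_1), …, (a_i,b_i)` is `y_k^i`-admissible if
`a_1 ≤ ⋯ ≤ a_i ≤ k < b_1, …, b_i` and the `b_t` are pairwise distinct.
(`k : Fin (n-1)` is `0`-based: it stands for the paper's `k+1`.) -/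
def yAdm (n : ℕ) (k : Fin (n - 1)) (L : List (Fin n × Fin n)) : Prop :=
  List.Chain' (· ≤ ·) (L.map Prod.fst) ∧
  (∀ p ∈ L, (p.1 : ℕ) ≤ (k : ℕ) ∧ (k : ℕ) < (p.2 : ℕ)) ∧
  (L.map Prod.snd).Nodup

/-- A path is `y^β`-admissible if it is a concatenation `P_1 ∘ ⋯ ∘ P_{n-1}` where
`P_k` is `y_k^{β_k}`-admissible. -/
def yBetaAdm (n : ℕ) (β : Fin (n - 1) → ℕ) (L : List (Fin n × Fin n)) : Prop :=
  ∃ Ls : Fin (n - 1) → List (Fin n × Fin n),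
    L = (List.ofFn Ls).flatten ∧
    ∀ k : Fin (n - 1), (Ls k).length = β k ∧ yAdm n k (Ls k)

/-- A path with labels `(a_1,b_1), …, (a_l,b_l)` is admissible if there are
`k_1 ≤ ⋯ ≤ k_l` with `a_t ≤ k_t < b_t` and the pairs `(k_t, b_t)` pairwise distinct. -/
def Adm (n : ℕ) (L : List (Fin n × Fin n)) : Prop :=
  ∃ ks : List ℕ, ks.length = L.length ∧ List.Chain' (· ≤ ·) ks ∧
    (∀ pr ∈ ks.zip L, (pr.2.1 : ℕ) ≤ pr.1 ∧ pr.1 < (pr.2.2 : ℕ)) ∧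
    (ks.zip (L.map Prod.snd)).Nodup

/-- The longest permutation `w_o : i ↦ n + 1 - i` (0-based: `i ↦ n - 1 - i`). -/
def wo (n : ℕ) : Equiv.Perm (Fin n) :=
  Function.Involutive.toPerm Fin.rev (fun i => Fin.rev_rev i)

def inversions (n : ℕ) (w : Perm (Fin n)) : Finset (Fin n × Fin n) :=
  Finset.univ.filter fun p => p.1 < p.2 ∧ w p.2 < w p.1

lemma len_eq_card_inversions (n : ℕ) (w : Perm (Fin n)) : len n w = (inversions n w).card :=
  rfl

section AdjacentSwap

variable {m : ℕ} (i : Fin m)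

lemma swap_castSucc_succ_lt_swap_castSucc_succ {a b : Fin (m + 1)} (hab : a < b)
    (hne : (a, b) ≠ (i.castSucc, i.succ)) :
    swap i.castSucc i.succ a < swap i.castSucc i.succ b := by
  simp only [ne_eq, Prod.mk.injEq, Fin.ext_iff, Fin.lt_def, swap_apply_def,
    Fin.val_castSucc, Fin.val_succ] at *
  split_ifs <;> simp_all <;> omega

lemma prodMap_swap_mem_inversions_mul_swap (w : Perm (Fin (m + 1))) {p : Fin (m + 1) × Fin (m + 1)}
    (hp : p ∈ (inversions (m + 1) w).erase (i.castSucc, i.succ)) :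
    Prod.map (swap i.castSucc i.succ) (swap i.castSucc i.succ) p ∈
      (inversions (m + 1) (w * swap i.castSucc i.succ)).erase (i.castSucc, i.succ) := by
  obtain ⟨a, b⟩ := p
  simp only [inversions, Finset.mem_erase, Finset.mem_filter, Finset.mem_univ, true_and] at hp ⊢
  obtain ⟨hne, hab, hw⟩ := hp
  refine ⟨?_, swap_castSucc_succ_lt_swap_castSucc_succ i hab hne, by simpa using hw⟩
  -- the image of `(a, b)` is `(i.castSucc, i.succ)` only if `(a, b) = (i.succ, i.castSucc)`
  simp only [Prod.map, ne_eq, Prod.mk.injEq, swap_apply_eq_iff, swap_apply_left,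
    swap_apply_right]
  rintro ⟨rfl, rfl⟩
  exact absurd hab (Fin.castSucc_lt_succ).asymm

lemma card_inversions_mul_swap_erase (w : Perm (Fin (m + 1))) :
    ((inversions (m + 1) (w * swap i.castSucc i.succ)).erase (i.castSucc, i.succ)).card =
      ((inversions (m + 1) w).erase (i.castSucc, i.succ)).card := by
  refine Finset.card_bij' (fun p _ => Prod.map (swap i.castSucc i.succ) (swap i.castSucc i.succ) p)
    (fun p _ => Prod.map (swap i.castSucc i.succ) (swap i.castSucc i.succ) p)
    (fun p hp => ?_) (fun p hp => prodMap_swap_mem_inversions_mul_swap i w hp)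
    (fun p _ => Prod.ext (swap_apply_self _ _ _) (swap_apply_self _ _ _))
    (fun p _ => Prod.ext (swap_apply_self _ _ _) (swap_apply_self _ _ _))
  simpa [mul_assoc] using prodMap_swap_mem_inversions_mul_swap i (w * swap i.castSucc i.succ) hp

lemma castSucc_succ_mem_inversions_iff (w : Perm (Fin (m + 1))) :
    (i.castSucc, i.succ) ∈ inversions (m + 1) w ↔ w i.succ < w i.castSucc := by
  simp [inversions]

lemma len_mul_swap_castSucc_succ (w : Perm (Fin (m + 1))) :
    len (m + 1) (w * swap i.castSucc i.succ) = len (m + 1) w + 1 ∨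
      len (m + 1) (w * swap i.castSucc i.succ) + 1 = len (m + 1) w := by
  have hcard := card_inversions_mul_swap_erase i w
  have hmem := castSucc_succ_mem_inversions_iff i w
  have hmem' := castSucc_succ_mem_inversions_iff i (w * swap i.castSucc i.succ)
  simp only [Perm.mul_apply, swap_apply_left, swap_apply_right] at hmem'
  simp only [len_eq_card_inversions]
  rcases lt_or_gt_of_ne (w.injective.ne (Fin.castSucc_lt_succ (i := i)).ne) with h | h
  · left
    rw [← Finset.card_erase_add_one (hmem'.2 h), hcard,
      Finset.erase_eq_of_notMem (fun hx => (hmem.1 hx).asymm h)]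
  · right
    rw [← Finset.card_erase_add_one (hmem.2 h), ← hcard,
      Finset.erase_eq_of_notMem (fun hx => (hmem'.1 hx).asymm h)]

lemma isQBEdge_castSucc_succ (u : Perm (Fin (m + 1))) :
    isQBEdge (m + 1) u (i.castSucc, i.succ) := by
  refine ⟨Fin.castSucc_lt_succ, ?_⟩
  simp only [step, Fin.val_succ, Fin.val_castSucc]
  have := len_mul_swap_castSucc_succ i u
  omega

end AdjacentSwap

lemma isPath_append {n : ℕ} {u v w : Perm (Fin n)} {L M : List (Fin n × Fin n)}
    (hL : isPath n u L v) (hM : isPath n v M w) : isPath n u (L ++ M) w := by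
  induction L generalizing u with
  | nil => exact (show u = v from hL) ▸ hM
  | cons p ps ih => exact ⟨hL.1, ih hL.2⟩

lemma exists_isPath_mul {m : ℕ} (u g : Perm (Fin (m + 1))) :
    ∃ L, isPath (m + 1) u L (u * g) := by
  have hg : g ∈ Submonoid.closure (Set.range fun i : Fin m => swap i.castSucc i.succ) := by
    simp [Perm.mclosure_swap_castSucc_succ]
  induction hg using Submonoid.closure_induction generalizing u with
  | mem _ hs =>
    obtain ⟨i, rfl⟩ := hs
    exact ⟨[(i.castSucc, i.succ)], isQBEdge_castSucc_succ i u, rfl⟩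
  | one => exact ⟨[], (mul_one u).symm⟩
  | mul g h _ _ ihg ihh =>
    obtain ⟨L, hL⟩ := ihg u
    obtain ⟨M, hM⟩ := ihh (u * g)
    exact ⟨L ++ M, isPath_append hL (mul_assoc u g h ▸ hM)⟩

theorem quantum_bruhat_graph_strongly_connected_general (n : ℕ)
    (u v : Equiv.Perm (Fin n)) :
    ∃ L : List (Fin n × Fin n), isPath n u L v := by
  cases n with
  | zero => exact ⟨[], Subsingleton.elim u v⟩
  | succ m => simpa using exists_isPath_mul u (u⁻¹ * v)

/-- For every `n ≥ 2` and every pair of permutations `u, v ∈ S_n`, there exists a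
directed path from `u` to `v` in the quantum Bruhat graph `Γ_n`. -/
theorem quantum_bruhat_graph_strongly_connected (n : ℕ) (hn : 2 ≤ n)
    (u v : Equiv.Perm (Fin n)) :
    ∃ L : List (Fin n × Fin n), isPath n u L v :=
  quantum_bruhat_graph_strongly_connected_general n u v
end

section
/- For every u ∈ S_n and 1 ≤ i < j ≤ n, the pair u → u·s_{ij} is an edge of the quantum Bruhat graph Γ_n of weight d ∈ ℤ^{n−1} if and only if w_o u w_o → (w_o u w_o)·s_{n+1−j, n+1−i} is an edge of Γ_n of weight d* given by (d*)_k = d_{n−k} for 1 ≤ k ≤ n−1. In particular conjugation by the longest permutation w_o is an automorphism of Γ_n that reverses the weight vectors. -/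
open Equiv

lemma wo_apply (n : ℕ) (x : Fin n) : wo n x = x.rev := rfl

lemma wo_mul_wo (n : ℕ) : wo n * wo n = 1 := by
  ext x; simp [wo_apply, Equiv.Perm.mul_apply]

lemma len_conj (n : ℕ) (w : Equiv.Perm (Fin n)) : len n (wo n * w * wo n) = len n w := by
  unfold len
  refine Finset.card_bij' (fun p _ => (p.2.rev, p.1.rev)) (fun p _ => (p.2.rev, p.1.rev))
    ?_ ?_ ?_ ?_
  · intro p hp
    simp only [Finset.mem_filter, Finset.mem_univ, true_and, Equiv.Perm.mul_apply, wo_apply,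
      Fin.rev_lt_rev] at hp ⊢
    exact hp
  · intro p hp
    simp only [Finset.mem_filter, Finset.mem_univ, true_and, Equiv.Perm.mul_apply, wo_apply,
      Fin.rev_lt_rev, Fin.rev_rev] at hp ⊢
    exact hp
  · intro p _; simp
  · intro p _; simp

lemma swap_conj (n : ℕ) (i j : Fin n) :
    Equiv.swap j.rev i.rev = wo n * Equiv.swap i j * wo n := by
  ext x
  simp only [Equiv.Perm.mul_apply, wo_apply]
  rcases eq_or_ne x j.rev with rfl | hxj
  · simp [Fin.rev_rev, Equiv.swap_apply_left]
  rcases eq_or_ne x i.rev with rfl | hxi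
  · simp [Fin.rev_rev, Equiv.swap_apply_right, Equiv.swap_apply_left]
  · rw [Equiv.swap_apply_of_ne_of_ne hxj hxi,
      Equiv.swap_apply_of_ne_of_ne, Fin.rev_rev]
    · intro h; exact hxi (by rw [← h, Fin.rev_rev])
    · intro h; exact hxj (by rw [← h, Fin.rev_rev])

lemma step_conj (n : ℕ) (u : Equiv.Perm (Fin n)) (i j : Fin n) :
    step n (wo n * u * wo n) (j.rev, i.rev) = wo n * step n u (i, j) * wo n := by
  unfold step
  simp only [swap_conj n i j]
  have h1 : wo n * u * wo n * (wo n * Equiv.swap i j * wo n)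
      = wo n * u * (wo n * wo n) * Equiv.swap i j * wo n := by group
  rw [h1, wo_mul_wo, mul_one, mul_assoc (wo n) u]

lemma fwd (n : ℕ) (u : Equiv.Perm (Fin n)) (i j : Fin n) (hij : i < j) (d : Fin (n-1) → ℤ)
    (h : isQBEdge n u (i, j) ∧ edgeWeight n u (i, j) = d) :
    isQBEdge n (wo n * u * wo n) (j.rev, i.rev) ∧
      edgeWeight n (wo n * u * wo n) (j.rev, i.rev) = fun m : Fin (n - 1) => d m.rev := by
  obtain ⟨⟨-, he⟩, rfl⟩ := h
  have hlen : len n (step n (wo n * u * wo n) (j.rev, i.rev)) = len n (step n u (i, j)) := by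
    rw [step_conj, len_conj]
  have hlu : len n (wo n * u * wo n) = len n u := len_conj n u
  have hdiff : ((i.rev : Fin n) : ℕ) - ((j.rev : Fin n) : ℕ) = (j : ℕ) - (i : ℕ) := by
    have hi := i.isLt; have hj := j.isLt
    simp only [Fin.val_rev]
    omega
  refine ⟨⟨Fin.rev_lt_rev.mpr hij, ?_⟩, ?_⟩
  · simpa only [hlen, hlu, hdiff] using he
  · funext m
    have hm := m.isLt
    have hi := i.isLt; have hj := j.isLt
    have hij' : (i : ℕ) < (j : ℕ) := hij
    have hjr : ((j.rev : Fin n) : ℕ) = n - ((j : ℕ) + 1) := Fin.val_rev j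
    have hir : ((i.rev : Fin n) : ℕ) = n - ((i : ℕ) + 1) := Fin.val_rev i
    have hmr : ((m.rev : Fin (n-1)) : ℕ) = (n - 1) - ((m : ℕ) + 1) := Fin.val_rev m
    unfold edgeWeight
    rw [hlen, hlu]
    by_cases hEq : len n (step n u (i, j)) = len n u + 1
    · rw [if_pos hEq, if_pos hEq]; rfl
    · rw [if_neg hEq, if_neg hEq]
      show (if ((j.rev : Fin n) : ℕ) ≤ (m : ℕ) ∧ (m : ℕ) < ((i.rev : Fin n) : ℕ) then (1:ℤ) else 0)
        = (if ((i : Fin n) : ℕ) ≤ ((m.rev : Fin (n-1)) : ℕ) ∧ ((m.rev : Fin (n-1)) : ℕ) < ((j : Fin n) : ℕ) then (1:ℤ) else 0)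
      by_cases hc : ((j.rev : Fin n) : ℕ) ≤ (m : ℕ) ∧ (m : ℕ) < ((i.rev : Fin n) : ℕ)
      · rw [if_pos hc, if_pos (by omega)]
      · rw [if_neg hc, if_neg (by omega)]


/-- Conjugation by the longest permutation `w_o` is an automorphism of the quantum
Bruhat graph `Γ_n` reversing the weight vectors: `u → u·s_{ij}` is an edge of weight
`d` iff `w_o u w_o → (w_o u w_o)·s_{n+1-j, n+1-i}` is an edge of weight
`d*`, where `(d*)_k = d_{n-k}`. -/
theorem conjugation_by_wo_graph_automorphism (n : ℕ) (hn : 2 ≤ n)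
    (u : Equiv.Perm (Fin n)) (i j : Fin n) (hij : i < j) (d : Fin (n - 1) → ℤ) :
    (isQBEdge n u (i, j) ∧ edgeWeight n u (i, j) = d) ↔
      (isQBEdge n (wo n * u * wo n) (j.rev, i.rev) ∧
        edgeWeight n (wo n * u * wo n) (j.rev, i.rev) = fun m : Fin (n - 1) => d m.rev) := by
  constructor
  · exact fwd n u i j hij d
  · intro h
    have h2 := fwd n (wo n * u * wo n) j.rev i.rev (Fin.rev_lt_rev.mpr hij)
      (fun m => d m.rev) h
    have hwuw : wo n * (wo n * u * wo n) * wo n = u := by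
      have h1 : wo n * (wo n * u * wo n) * wo n = (wo n * wo n) * u * (wo n * wo n) := by group
      rw [h1, wo_mul_wo, one_mul, mul_one]
    rw [hwuw, Fin.rev_rev, Fin.rev_rev] at h2
    refine ⟨h2.1, ?_⟩
    rw [h2.2]; funext m; simp [Fin.rev_rev]
end

section
/- Every y^β-admissible directed path in the quantum Bruhat graph Γ_n whose initial vertex is the identity permutation has weight 0 in ℤ^{n−1}; equivalently, every edge of such a path satisfies the length-increasing condition ℓ(u s_{ij}) = ℓ(u) + 1, so the path is a saturated chain in the Bruhat order. -/
open Equiv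

/-!
Comparing inversion sets through `σ` gives `ℓ(uσ) + 2·#(Inv σ \ Inv(uσ)) = ℓ(u) + ℓ(σ)`. For
`σ = s_{ab}` this shows that a Bruhat cover `u → u s_{ab}` has `u(a) < u(b)` and no value strictly
between them at a position strictly between `a` and `b`, while a quantum edge has
`u(b) < u(c) < u(a)` for all `a < c < b`.

During stage `k`, the permutation stays increasing on the positions `≥ k`, except between `k` and
the positions already used as second labels in the stage: covers `(a, b)` with `a ≤ k < b` preserve
this, and it rules out a quantum edge `(a, b)` with a fresh `b`, because it gives `u(k) < u(b)`.
The identity satisfies it for every `k`, so every edge of the path is a cover.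
-/

namespace QuantumBruhat

open Equiv Finset

variable {n : ℕ}

def inversions (w : Perm (Fin n)) : Finset (Fin n × Fin n) := {x | x.1 < x.2 ∧ w x.2 < w x.1}

theorem len_eq_card_inversions (w : Perm (Fin n)) : len n w = #(inversions w) := rfl

theorem mem_inversions {w : Perm (Fin n)} {x : Fin n × Fin n} :
    x ∈ inversions w ↔ x.1 < x.2 ∧ w x.2 < w x.1 := by
  simp [inversions]

theorem len_eq_card_sdiff_add_card_sdiff (u σ : Perm (Fin n)) :
    len n u = #(inversions (u * σ) \ inversions σ) + #(inversions σ \ inversions (u * σ)) := by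
  have hreindex : len n u = #{x : Fin n × Fin n | σ x.1 < σ x.2 ∧ (u * σ) x.2 < (u * σ) x.1} :=
    (card_equiv (σ.prodCongr σ) fun x => by simp only [mem_filter, mem_univ, true_and]; simp).symm
  rw [hreindex, ← card_filter_add_card_filter_not (p := fun x : Fin n × Fin n => x.1 < x.2)]
  congr 1
  · congr 1
    ext x
    simp only [mem_filter, mem_univ, true_and, mem_sdiff, mem_inversions, not_and, not_lt]
    constructor
    · rintro ⟨⟨hσ, hw⟩, hx⟩
      exact ⟨⟨hx, hw⟩, fun _ => hσ.le⟩
    · rintro ⟨⟨hx, hw⟩, hσ⟩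
      exact ⟨⟨(hσ hx).lt_of_ne (σ.injective.ne hx.ne), hw⟩, hx⟩
  · refine card_equiv (Equiv.prodComm _ _) fun x => ?_
    simp only [mem_filter, mem_univ, true_and, mem_sdiff, mem_inversions, not_and, not_lt,
      prodComm_apply, Prod.fst_swap, Prod.snd_swap]
    constructor
    · rintro ⟨⟨hσ, hw⟩, hx⟩
      exact ⟨⟨hx.lt_of_ne fun h => by simp [h] at hw, hσ⟩, fun _ => hw.le⟩
    · rintro ⟨⟨hx, hσ⟩, hw⟩
      exact ⟨⟨hσ, (hw hx).lt_of_ne ((u * σ).injective.ne hx.ne)⟩, hx.le⟩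

theorem len_mul_add_two_mul_card_sdiff (u σ : Perm (Fin n)) :
    len n (u * σ) + 2 * #(inversions σ \ inversions (u * σ)) = len n u + len n σ := by
  rw [len_eq_card_sdiff_add_card_sdiff u σ, len_eq_card_inversions (u * σ),
    len_eq_card_inversions σ, ← card_sdiff_add_card_inter (inversions (u * σ)) (inversions σ),
    ← card_sdiff_add_card_inter (inversions σ), inter_comm]
  ring

theorem inversions_swap {a b : Fin n} (hab : a < b) :
    inversions (swap a b) = insert (a, b) ({a} ×ˢ Ioo a b ∪ Ioo a b ×ˢ {b}) := by
  ext ⟨p, q⟩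
  simp only [mem_inversions, mem_insert, mem_union, mem_product, mem_singleton, mem_Ioo,
    Prod.mk.injEq, swap_apply_def]
  rw [Fin.lt_def] at hab
  split_ifs <;> simp only [Fin.lt_def, Fin.ext_iff] at * <;> omega

theorem card_filter_inversions_swap {a b : Fin n} (hab : a < b)
    (P : Fin n × Fin n → Prop) [DecidablePred P] :
    #{x ∈ inversions (swap a b) | P x} =
      #{c ∈ Ioo a b | P (a, c)} + #{c ∈ Ioo a b | P (c, b)} + if P (a, b) then 1 else 0 := by
  have hdisj : Disjoint ({a} ×ˢ Ioo a b) (Ioo a b ×ˢ {b}) := by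
    simp only [disjoint_left, mem_product, mem_singleton, mem_Ioo]
    rintro x ⟨rfl, -⟩ ⟨⟨h, -⟩, -⟩
    exact h.false
  have hnotMem : (a, b) ∉ ({a} ×ˢ Ioo a b ∪ Ioo a b ×ˢ {b}) := by
    simp [mem_Ioo]
  rw [inversions_swap hab, card_filter, sum_insert hnotMem, sum_union hdisj, sum_product,
    sum_product, sum_singleton, card_filter, card_filter]
  simp only [sum_singleton]
  ring

theorem len_mul_swap_add {a b : Fin n} (hab : a < b) (u : Perm (Fin n)) :
    len n (u * swap a b) + 2 * (#{c ∈ Ioo a b | u b < u c} + #{c ∈ Ioo a b | u c < u a} +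
      if u b < u a then 1 else 0) = len n u + (2 * #(Ioo a b) + 1) := by
  have hlen : len n (swap a b) = 2 * #(Ioo a b) + 1 := by
    have := card_filter_inversions_swap hab fun _ => True
    simp only [filter_true, if_true] at this
    rw [len_eq_card_inversions, this]
    ring
  have hK : #(inversions (swap a b) \ inversions (u * swap a b)) =
      #{c ∈ Ioo a b | u b < u c} + #{c ∈ Ioo a b | u c < u a} +
        if u b < u a then 1 else 0 := by
    have hnotMem : ∀ x ∈ inversions (swap a b), x ∉ inversions (u * swap a b) ↔
        (u * swap a b) x.1 < (u * swap a b) x.2 := fun x hx => by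
      rw [mem_inversions] at hx
      rw [mem_inversions, not_and, not_lt]
      exact ⟨fun h => (h hx.1).lt_of_ne ((u * swap a b).injective.ne hx.1.ne), fun h _ => h.le⟩
    rw [sdiff_eq_filter, filter_congr hnotMem, card_filter_inversions_swap hab]
    simp only [Perm.mul_apply, swap_apply_left, swap_apply_right]
    congr 3 <;> refine filter_congr fun c hc => ?_ <;> rw [mem_Ioo] at hc <;>
      rw [swap_apply_of_ne_of_ne hc.1.ne' hc.2.ne]
  rw [← hlen, ← hK]
  exact len_mul_add_two_mul_card_sdiff u _

theorem apply_lt_apply_of_len_mul_swap_eq_add_one {a b : Fin n} (hab : a < b) {u : Perm (Fin n)}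
    (h : len n (u * swap a b) = len n u + 1) :
    u a < u b ∧ ∀ c ∈ Ioo a b, ¬ (u a < u c ∧ u c < u b) := by
  have key := len_mul_swap_add hab u
  rw [h] at key
  have hlt : u a < u b := by
    refine (lt_or_gt_of_ne (u.injective.ne hab.ne)).resolve_right fun hba => ?_
    have hcover : Ioo a b ⊆ {c ∈ Ioo a b | u b < u c} ∪ {c ∈ Ioo a b | u c < u a} := by
      intro c hc
      rw [← filter_or, mem_filter]
      exact ⟨hc, (lt_or_gt_of_ne (u.injective.ne (mem_Ioo.1 hc).2.ne)).elim
        (fun hcb => Or.inr (hcb.trans hba)) Or.inl⟩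
    have := (card_le_card hcover).trans (card_union_le _ _)
    rw [if_pos hba] at key
    omega
  refine ⟨hlt, fun c hc hbetween => ?_⟩
  have hdisj : Disjoint {c ∈ Ioo a b | u b < u c} {c ∈ Ioo a b | u c < u a} :=
    disjoint_filter.2 fun c _ h1 h2 => lt_asymm (h2.trans hlt) h1
  have hall : #{c ∈ Ioo a b | u b < u c ∨ u c < u a} = #(Ioo a b) := by
    rw [filter_or, card_union_of_disjoint hdisj]
    rw [if_neg (lt_asymm hlt)] at key
    omega
  rcases filter_card_eq hall c hc with h1 | h2
  · exact lt_asymm h1 hbetween.2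
  · exact lt_asymm h2 hbetween.1

theorem apply_lt_apply_of_len_mul_swap_add_eq {a b : Fin n} (hab : a < b) {u : Perm (Fin n)}
    (h : len n (u * swap a b) + 2 * ((b : ℕ) - a) = len n u + 1) :
    u b < u a ∧ ∀ c ∈ Ioo a b, u b < u c ∧ u c < u a := by
  have key := len_mul_swap_add hab u
  have hIoo : #(Ioo a b) + 1 = (b : ℕ) - a := by
    rw [Fin.card_Ioo]
    have : (a : ℕ) < b := hab
    omega
  have h1 := card_filter_le (Ioo a b) fun c => u b < u c
  have h2 := card_filter_le (Ioo a b) fun c => u c < u a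
  have hba : u b < u a := by
    by_contra hba
    rw [if_neg hba] at key
    omega
  rw [if_pos hba] at key
  have e1 : #{c ∈ Ioo a b | u b < u c} = #(Ioo a b) := by omega
  have e2 : #{c ∈ Ioo a b | u c < u a} = #(Ioo a b) := by omega
  exact ⟨hba, fun c hc => ⟨filter_card_eq e1 c hc, filter_card_eq e2 c hc⟩⟩

def IncreasingFrom (u : Perm (Fin n)) (k : ℕ) (B : Finset (Fin n)) : Prop :=
  ∀ i j : Fin n, k ≤ (i : ℕ) → i < j → ((i : ℕ) = k → j ∉ B) → u i < u j

theorem increasingFrom_one (k : ℕ) (B : Finset (Fin n)) : IncreasingFrom 1 k B :=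
  fun _ _ _ hij _ => hij

theorem IncreasingFrom.mono {u : Perm (Fin n)} {k k' : ℕ} {B : Finset (Fin n)}
    (h : IncreasingFrom u k B) (hk : k < k') (B' : Finset (Fin n)) : IncreasingFrom u k' B' :=
  fun i j hi hij _ => h i j (by omega) hij fun _ => by omega

theorem IncreasingFrom.len_mul_swap_eq_add_one {u : Perm (Fin n)} {k : ℕ} {B : Finset (Fin n)}
    (h : IncreasingFrom u k B) {a b : Fin n} (ha : (a : ℕ) ≤ k) (hb : k < (b : ℕ)) (hbB : b ∉ B)
    (hedge : isQBEdge n u (a, b)) : len n (step n u (a, b)) = len n u + 1 := by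
  obtain ⟨hab, hcover | hquantum⟩ := hedge
  · exact hcover
  obtain ⟨hba, hbetween⟩ := apply_lt_apply_of_len_mul_swap_add_eq hab hquantum
  set i : Fin n := ⟨k, hb.trans b.isLt⟩
  have hib : u i < u b := h i b le_rfl hb fun _ => hbB
  rcases (show a ≤ i from ha).eq_or_lt with rfl | hai
  · exact absurd hba (lt_asymm hib)
  · exact absurd (hbetween i (mem_Ioo.2 ⟨hai, hb⟩)).1 (lt_asymm hib)

theorem IncreasingFrom.mul_swap {u : Perm (Fin n)} {k : ℕ} {B : Finset (Fin n)}
    (h : IncreasingFrom u k B) {a b : Fin n} (ha : (a : ℕ) ≤ k) (hb : k < (b : ℕ)) (hbB : b ∉ B)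
    (hcov : u a < u b ∧ ∀ c ∈ Ioo a b, ¬ (u a < u c ∧ u c < u b)) :
    IncreasingFrom (u * swap a b) k (insert b B) := by
  intro i j hi hij hiB
  have hai : a ≤ i := Fin.le_def.2 (ha.trans hi)
  have hja : j ≠ a := (hai.trans_lt hij).ne'
  simp only [Perm.mul_apply]
  rcases eq_or_ne i a with rfl | hia
  · obtain ⟨hjb, hjB⟩ : j ≠ b ∧ j ∉ B := not_or.1 <| mem_insert.not.1 <| hiB (by omega)
    rw [swap_apply_left, swap_apply_of_ne_of_ne hja hjb]
    rcases hjb.lt_or_gt with hjb | hbj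
    · have hij' : u i < u j := h i j hi hij fun _ => hjB
      have hjb' : ¬ u j < u b := fun hjb' => hcov.2 j (mem_Ioo.2 ⟨hij, hjb⟩) ⟨hij', hjb'⟩
      exact (not_lt.1 hjb').lt_of_ne (u.injective.ne hjb.ne')
    · exact h b j hb.le hbj fun _ => by omega
  rcases eq_or_ne i b with rfl | hib
  · rw [swap_apply_right, swap_apply_of_ne_of_ne hja hij.ne']
    exact hcov.1.trans (h i j hb.le hij fun _ => by omega)
  rw [swap_apply_of_ne_of_ne hia hib]
  rcases eq_or_ne j b with rfl | hjb
  · rw [swap_apply_right]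
    have hij' : u i < u j := h i j hi hij fun _ => hbB
    have hia' : ¬ u a < u i := fun hai' =>
      hcov.2 i (mem_Ioo.2 ⟨hai.lt_of_ne hia.symm, hij⟩) ⟨hai', hij'⟩
    exact (not_lt.1 hia').lt_of_ne (u.injective.ne hia)
  · rw [swap_apply_of_ne_of_ne hja hjb]
    exact h i j hi hij fun hik hjB => hiB hik (mem_insert_of_mem hjB)

theorem isPath_append {u v : Perm (Fin n)} {L₁ L₂ : List (Fin n × Fin n)}
    (h : isPath n u (L₁ ++ L₂) v) : ∃ w, isPath n u L₁ w ∧ isPath n w L₂ v := by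
  induction L₁ generalizing u with
  | nil => exact ⟨u, rfl, h⟩
  | cons p ps ih =>
    obtain ⟨w, h₁, h₂⟩ := ih h.2
    exact ⟨w, ⟨h.1, h₁⟩, h₂⟩

theorem allUp_append {u w : Perm (Fin n)} {L₁ L₂ : List (Fin n × Fin n)}
    (h : isPath n u L₁ w) (h₁ : allUp n u L₁) (h₂ : allUp n w L₂) :
    allUp n u (L₁ ++ L₂) := by
  induction L₁ generalizing u with
  | nil => cases h; exact h₂
  | cons p ps ih => exact ⟨h₁.1, ih h.2 h₁.2⟩

theorem pathWeight_eq_zero_of_allUp {u : Perm (Fin n)} {L : List (Fin n × Fin n)}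
    (h : allUp n u L) : pathWeight n u L = 0 := by
  induction L generalizing u with
  | nil => rfl
  | cons p ps ih => simp only [pathWeight, edgeWeight, if_pos h.1, ih h.2, add_zero]

theorem IncreasingFrom.allUp_of_isPath {k : ℕ} {u v : Perm (Fin n)} {B : Finset (Fin n)}
    {L : List (Fin n × Fin n)} (h : IncreasingFrom u k B) (hpath : isPath n u L v)
    (hL : ∀ p ∈ L, (p.1 : ℕ) ≤ k ∧ k < (p.2 : ℕ)) (hnodup : (L.map Prod.snd).Nodup)
    (hB : ∀ p ∈ L, p.2 ∉ B) : allUp n u L ∧ ∃ B', IncreasingFrom v k B' := by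
  induction L generalizing u B with
  | nil => exact ⟨trivial, B, hpath ▸ h⟩
  | cons p ps ih =>
    obtain ⟨hedge, hrest⟩ := hpath
    obtain ⟨ha, hb⟩ := hL p List.mem_cons_self
    have hpB := hB p List.mem_cons_self
    rw [List.map_cons, List.nodup_cons] at hnodup
    have hup := h.len_mul_swap_eq_add_one ha hb hpB hedge
    have hstep := h.mul_swap ha hb hpB (apply_lt_apply_of_len_mul_swap_eq_add_one hedge.1 hup)
    obtain ⟨hups, hv⟩ := ih hstep hrest (fun q hq => hL q (List.mem_cons_of_mem _ hq))
      hnodup.2 fun q hq hqB => (mem_insert.1 hqB).elim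
        (fun hq' => hnodup.1 (hq' ▸ List.mem_map_of_mem hq)) (hB q (List.mem_cons_of_mem _ hq))
    exact ⟨⟨hup, hups⟩, hv⟩

theorem allUp_flatten {m : ℕ} {ks : List (Fin m)} (hks : ks.Pairwise (· < ·))
    {Ls : Fin m → List (Fin n × Fin n)}
    (hLs : ∀ k ∈ ks, (∀ p ∈ Ls k, (p.1 : ℕ) ≤ k ∧ k < (p.2 : ℕ)) ∧ ((Ls k).map Prod.snd).Nodup)
    {u v : Perm (Fin n)} (hu : ∀ k ∈ ks, IncreasingFrom u k ∅)
    (hpath : isPath n u (ks.map Ls).flatten v) : allUp n u (ks.map Ls).flatten := by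
  induction ks generalizing u with
  | nil => trivial
  | cons k ks ih =>
    rw [List.map_cons, List.flatten_cons] at hpath ⊢
    obtain ⟨w, hk, hks'⟩ := isPath_append hpath
    obtain ⟨hL, hnodup⟩ := hLs k List.mem_cons_self
    obtain ⟨hup, B, hw⟩ :=
      (hu k List.mem_cons_self).allUp_of_isPath hk hL hnodup fun _ _ => notMem_empty _
    rw [List.pairwise_cons] at hks
    exact allUp_append hk hup <| ih hks.2 (fun k' hk' => hLs k' (List.mem_cons_of_mem _ hk'))
      (fun k' hk' => hw.mono (hks.1 k' hk') ∅) hks'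

end QuantumBruhat

theorem admissible_path_from_identity_weight_zero_general (n : ℕ)
    (v : Equiv.Perm (Fin n)) (β : Fin (n - 1) → ℕ) (L : List (Fin n × Fin n))
    (hpath : isPath n 1 L v) (hadm : yBetaAdm n β L) :
    pathWeight n 1 L = 0 ∧ allUp n 1 L := by
  obtain ⟨Ls, rfl, hLs⟩ := hadm
  rw [List.ofFn_eq_map] at hpath ⊢
  have hup := QuantumBruhat.allUp_flatten (List.pairwise_lt_finRange _)
    (fun k _ => (hLs k).2.2) (fun k _ => QuantumBruhat.increasingFrom_one k ∅) hpath
  exact ⟨QuantumBruhat.pathWeight_eq_zero_of_allUp hup, hup⟩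

/-- Every `y^β`-admissible directed path in `Γ_n` starting at the identity has
weight `0` in `ℤ^{n-1}`; equivalently, every edge of such a path is
length-increasing, so the path is a saturated chain in the Bruhat order. -/
theorem admissible_path_from_identity_weight_zero (n : ℕ) (hn : 2 ≤ n)
    (v : Equiv.Perm (Fin n)) (β : Fin (n - 1) → ℕ) (L : List (Fin n × Fin n))
    (hpath : isPath n 1 L v) (hadm : yBetaAdm n β L) :
    pathWeight n 1 L = 0 ∧ allUp n 1 L :=
  admissible_path_from_identity_weight_zero_general n v β L hpath hadm
end

section
/- If there exists an admissible directed path in the quantum Bruhat graph Γ_n from u to v of weight d ∈ ℤ_{≥0}^{n−1}, then there exist β = (β_1,…,β_{n−1}) ∈ ℤ_{≥0}^{n−1} with β_k ≤ n−k for all k and a y^β-admissible directed path in Γ_n from u to v of the same weight d. -/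
open Equiv

/-!
Sort the edges of an admissible path by the key pair `(k_t, a_t)`. The keys are already weakly
increasing, so only adjacent edges `p = (a, b)`, `q = (a', b')` with the same key `k` and
`a' < a ≤ k < b'`, `b ≠ b'`, ever have to be exchanged. Their transpositions commute, and `q` is
an edge of the same kind (Bruhat or quantum) before and after `s_p`; this is read off from
`ℓ(us) + 2 |Inv u ∩ Inv s⁻¹| = ℓ(u) + ℓ(s)`, which turns the two edge conditions into
conditions on the values of `u` on `[a, b]`. Hence the exchanged path has the same endpoints
and weight. In the sorted path the edges of key `k` form a `y_k`-admissible block, and its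
targets `b` are distinct elements of `(k, n]`, so there are at most `n - k` of them.
-/

namespace List

variable {α : Type*}

lemma filter_lt_append_filter_eq_filter_lt_succ (f : α → ℕ) {l : List α}
    (hl : l.Pairwise fun x y => f x ≤ f y) (m : ℕ) :
    l.filter (f · < m) ++ l.filter (f · = m) = l.filter (f · < m + 1) := by
  induction l with
  | nil => rfl
  | cons x l ih =>
    obtain ⟨hx, hl⟩ := pairwise_cons.mp hl
    rcases lt_trichotomy (f x) m with h | h | h
    · simp [h, h.ne, h.le, ih hl]
    · subst h
      have hnil : l.filter (f · < f x) = [] :=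
        filter_eq_nil_iff.mpr fun y hy => by simpa using hx y hy
      simpa [hnil] using ih hl
    · simp [h, h.not_gt, h.ne', ih hl]

lemma flatten_ofFn_filter_eq_filter_lt (f : α → ℕ) {l : List α}
    (hl : l.Pairwise fun x y => f x ≤ f y) (m : ℕ) :
    (ofFn fun k : Fin m => l.filter (f · = k)).flatten = l.filter (f · < m) := by
  induction m with
  | zero => simp
  | succ m ih =>
    rw [ofFn_succ', concat_eq_append, flatten_append,
      ← filter_lt_append_filter_eq_filter_lt_succ f hl]
    simp [ih]

end List

namespace QuantumBruhatGraph

open Finset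

variable {n : ℕ}

def inversions (w : Perm (Fin n)) : Finset (Fin n × Fin n) :=
  univ.filter fun p => p.1 < p.2 ∧ w p.2 < w p.1

lemma len_eq_card_inversions (w : Perm (Fin n)) : len n w = #(inversions w) := rfl

lemma mem_inversions {w : Perm (Fin n)} {p : Fin n × Fin n} :
    p ∈ inversions w ↔ p.1 < p.2 ∧ w p.2 < w p.1 := by
  simp [inversions]

lemma len_mul (u s : Perm (Fin n)) :
    len n (u * s) = #(inversions u \ inversions s⁻¹) + #(inversions s⁻¹ \ inversions u) := by
  set t := s⁻¹
  have reindex :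
      len n (u * s) = #(univ.filter fun p : Fin n × Fin n => t p.1 < t p.2 ∧ u p.2 < u p.1) := by
    refine card_nbij' (fun p => (s p.1, s p.2)) (fun p => (t p.1, t p.2)) ?_ ?_ ?_ ?_ <;>
      intro p hp <;> simp only [coe_filter, mem_univ, true_and, Set.mem_ofPred_eq] at hp ⊢ <;>
      simp_all [t]
  rw [reindex, ← card_filter_add_card_filter_not (fun p : Fin n × Fin n => p.1 < p.2),
    filter_filter, filter_filter]
  congr 1
  · congr 1
    ext p
    simp only [mem_filter, mem_univ, true_and, mem_sdiff, mem_inversions, not_and, not_lt]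
    constructor
    · rintro ⟨⟨h1, h2⟩, h3⟩
      exact ⟨⟨h3, h2⟩, fun _ => h1.le⟩
    · rintro ⟨⟨h1, h2⟩, h3⟩
      exact ⟨⟨lt_of_le_of_ne (h3 h1) (t.injective.ne h1.ne), h2⟩, h1⟩
  · refine card_nbij' Prod.swap Prod.swap ?_ ?_ (fun _ _ => rfl) (fun _ _ => rfl) <;>
      intro ⟨i, j⟩ <;>
      simp only [coe_filter, coe_sdiff, Set.mem_ofPred_eq, Set.mem_sdiff, mem_coe, mem_univ,
        true_and, mem_inversions, Prod.swap, not_and, not_lt]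
    · rintro ⟨⟨h1, h2⟩, h3⟩
      have hij : j < i := lt_of_le_of_ne h3 (fun h => by simp [h] at h2)
      exact ⟨⟨hij, h1⟩, fun _ => h2.le⟩
    · rintro ⟨⟨h1, h2⟩, h3⟩
      exact ⟨⟨h2, lt_of_le_of_ne (h3 h1) (u.injective.ne h1.ne)⟩, h1.le⟩

lemma len_mul_add_two_mul_card_inter (u s : Perm (Fin n)) :
    len n (u * s) + 2 * #(inversions u ∩ inversions s⁻¹) = len n u + len n s⁻¹ := by
  rw [len_mul, len_eq_card_inversions u, len_eq_card_inversions s⁻¹,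
    ← card_sdiff_add_card_inter (inversions u) (inversions s⁻¹),
    ← card_sdiff_add_card_inter (inversions s⁻¹) (inversions u), inter_comm]
  ring

def IsBruhatEdge (u : Perm (Fin n)) (a b : Fin n) : Prop :=
  u a < u b ∧ ∀ x, a < x → x < b → ¬(u a < u x ∧ u x < u b)

def IsQuantumEdge (u : Perm (Fin n)) (a b : Fin n) : Prop :=
  u b < u a ∧ ∀ x, a < x → x < b → u b < u x ∧ u x < u a

section swap

variable {a b : Fin n}

lemma mem_inversions_swap (hab : a < b) {p : Fin n × Fin n} :
    p ∈ inversions (swap a b) ↔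
      p = (a, b) ∨ (p.1 = a ∧ p.2 ∈ Ioo a b) ∨ (p.2 = b ∧ p.1 ∈ Ioo a b) := by
  obtain ⟨x, y⟩ := p
  have hab' : (a : ℕ) < b := hab
  simp only [mem_inversions, swap_apply_def, mem_Ioo, Prod.mk.injEq]
  split_ifs <;> simp only [Fin.lt_def, Fin.ext_iff] at * <;> omega

lemma inversions_swap (hab : a < b) :
    inversions (swap a b) = insert (a, b) ({a} ×ˢ Ioo a b ∪ Ioo a b ×ˢ {b}) := by
  ext ⟨x, y⟩
  rw [mem_inversions_swap hab]
  simp only [mem_insert, mem_union, mem_product, mem_singleton, Prod.mk.injEq]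
  tauto

lemma card_inversions_inter_swap (hab : a < b) (u : Perm (Fin n)) :
    #(inversions u ∩ inversions (swap a b)) =
      (if u b < u a then 1 else 0) + #{x ∈ Ioo a b | u x < u a} +
        #{x ∈ Ioo a b | u b < u x} := by
  have hinter : inversions u ∩ inversions (swap a b) =
      (inversions (swap a b)).filter fun p => u p.2 < u p.1 := by
    ext p
    simp only [mem_inter, mem_filter, mem_inversions]
    tauto
  have hnot : (a, b) ∉ {a} ×ˢ Ioo a b ∪ Ioo a b ×ˢ {b} := by simp
  have hdisj : Disjoint ({a} ×ˢ Ioo a b) (Ioo a b ×ˢ {b}) :=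
    disjoint_product.mpr (Or.inl (disjoint_singleton_left.mpr (by simp)))
  rw [hinter, inversions_swap hab, filter_insert, filter_union]
  have hleft : #{p ∈ {a} ×ˢ Ioo a b | u p.2 < u p.1} = #{x ∈ Ioo a b | u x < u a} := by
    rw [singleton_product, filter_map, card_map]
    rfl
  have hright : #{p ∈ Ioo a b ×ˢ {b} | u p.2 < u p.1} = #{x ∈ Ioo a b | u b < u x} := by
    rw [product_singleton, filter_map, card_map]
    rfl
  have hdisj' := hdisj.mono (filter_subset (fun p : Fin n × Fin n => u p.2 < u p.1) _)
    (filter_subset (fun p : Fin n × Fin n => u p.2 < u p.1) _)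
  split_ifs with h
  · rw [card_insert_of_notMem fun hm => hnot (union_subset_union (filter_subset _ _)
      (filter_subset _ _) hm), card_union_of_disjoint hdisj', hleft, hright]
    ring
  · rw [card_union_of_disjoint hdisj', hleft, hright, zero_add]

lemma len_swap (hab : a < b) : len n (swap a b) = 2 * ((b : ℕ) - a) - 1 := by
  have hfix : ∀ x ∈ Ioo a b, swap a b x = x := fun x hx =>
    swap_apply_of_ne_of_ne (mem_Ioo.mp hx).1.ne' (mem_Ioo.mp hx).2.ne
  have h := card_inversions_inter_swap hab (swap a b)
  rw [inter_self, ← len_eq_card_inversions, swap_apply_left, swap_apply_right, if_pos hab,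
    filter_true_of_mem fun x hx => (hfix x hx).symm ▸ (mem_Ioo.mp hx).2,
    filter_true_of_mem fun x hx => (hfix x hx).symm ▸ (mem_Ioo.mp hx).1, Fin.card_Ioo] at h
  have hab' : (a : ℕ) < b := hab
  omega

lemma len_mul_swap (hab : a < b) (u : Perm (Fin n)) :
    len n (u * swap a b) + 2 * ((if u b < u a then 1 else 0) + #{x ∈ Ioo a b | u x < u a} +
      #{x ∈ Ioo a b | u b < u x}) = len n u + (2 * ((b : ℕ) - a) - 1) := by
  rw [← card_inversions_inter_swap hab, ← len_swap hab, ← swap_inv]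
  exact len_mul_add_two_mul_card_inter u _

lemma len_mul_swap_eq_add_one_iff (hab : a < b) (u : Perm (Fin n)) :
    len n (u * swap a b) = len n u + 1 ↔ IsBruhatEdge u a b := by
  have hlen := len_mul_swap hab u
  have hI : #(Ioo a b) = (b : ℕ) - a - 1 := Fin.card_Ioo a b
  have hab' : (a : ℕ) < b := hab
  by_cases hba : u b < u a
  · have hcover : Ioo a b ⊆ {x ∈ Ioo a b | u x < u a} ∪ {x ∈ Ioo a b | u b < u x} := by
      intro x hx
      rcases lt_or_ge (u x) (u a) with h | h
      · exact mem_union_left _ (mem_filter.mpr ⟨hx, h⟩)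
      · exact mem_union_right _ (mem_filter.mpr ⟨hx, hba.trans_le h⟩)
    have := (card_le_card hcover).trans (card_union_le _ _)
    rw [if_pos hba] at hlen
    exact ⟨fun h => by omega, fun h => absurd h.1 hba.not_gt⟩
  · have hab_u : u a < u b := lt_of_le_of_ne (not_lt.mp hba) (u.injective.ne hab.ne)
    have hdisj : Disjoint {x ∈ Ioo a b | u x < u a} {x ∈ Ioo a b | u b < u x} :=
      disjoint_filter.mpr fun x _ h1 h2 => (h1.trans hab_u).not_gt h2
    have hcount : #{x ∈ Ioo a b | u x < u a} + #{x ∈ Ioo a b | u b < u x} = #(Ioo a b) ↔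
        ∀ x, a < x → x < b → ¬(u a < u x ∧ u x < u b) := by
      rw [← card_union_of_disjoint hdisj, ← filter_or, card_filter_eq_iff]
      refine ⟨fun h x hax hxb => ?_, fun h x hx => ?_⟩
      · have hx : x ∈ Ioo a b := mem_Ioo.mpr ⟨hax, hxb⟩
        exact fun ⟨h1, h2⟩ => (h x hx).elim h1.not_gt h2.not_gt
      · have hxa : u x ≠ u a := u.injective.ne (mem_Ioo.mp hx).1.ne'
        have hxb : u x ≠ u b := u.injective.ne (mem_Ioo.mp hx).2.ne
        have := h x (mem_Ioo.mp hx).1 (mem_Ioo.mp hx).2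
        rcases lt_or_gt_of_ne hxa with h1 | h1
        · exact Or.inl h1
        · exact Or.inr (lt_of_le_of_ne (not_lt.mp fun h2 => this ⟨h1, h2⟩) hxb.symm)
    rw [if_neg hba] at hlen
    rw [IsBruhatEdge, and_iff_right hab_u, ← hcount]
    omega

lemma len_mul_swap_add_eq_iff (hab : a < b) (u : Perm (Fin n)) :
    len n (u * swap a b) + 2 * ((b : ℕ) - a) = len n u + 1 ↔ IsQuantumEdge u a b := by
  have hlen := len_mul_swap hab u
  have hI : #(Ioo a b) = (b : ℕ) - a - 1 := Fin.card_Ioo a b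
  have hab' : (a : ℕ) < b := hab
  have hA := card_filter_le (Ioo a b) fun x => u x < u a
  have hB := card_filter_le (Ioo a b) fun x => u b < u x
  have hfull :
      #{x ∈ Ioo a b | u x < u a} = #(Ioo a b) ∧ #{x ∈ Ioo a b | u b < u x} = #(Ioo a b) ↔
        ∀ x, a < x → x < b → u b < u x ∧ u x < u a := by
    simp only [card_filter_eq_iff, mem_Ioo, and_imp]
    exact ⟨fun h x h1 h2 => ⟨h.2 x h1 h2, h.1 x h1 h2⟩,
      fun h => ⟨fun x h1 h2 => (h x h1 h2).2, fun x h1 h2 => (h x h1 h2).1⟩⟩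
  rw [IsQuantumEdge, ← hfull]
  split_ifs at hlen with hba <;> simp only [hba, true_and, false_and, iff_false] <;> omega

end swap

lemma swap_mem_Ioo_or {a b c d x : Fin n} (hac : a < c) (hcb : c < b) (hcd : c < d)
    (hdb : d ≠ b) (hax : a < x) (hxb : x < b) :
    (a < swap c d x ∧ swap c d x < b) ∨ (x = c ∧ b < d) := by
  rcases eq_or_ne x c with rfl | hxc
  · rw [swap_apply_left]
    rcases hdb.lt_or_gt with h | h
    · exact Or.inl ⟨hac.trans hcd, h⟩
    · exact Or.inr ⟨rfl, h⟩
  · rcases eq_or_ne x d with rfl | hxd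
    · exact Or.inl (by rw [swap_apply_right]; exact ⟨hac, hcb⟩)
    · exact Or.inl (by rw [swap_apply_of_ne_of_ne hxc hxd]; exact ⟨hax, hxb⟩)

section transfer

variable {u : Perm (Fin n)} {a b c d : Fin n}

/- On `[a, b]`, `u * swap c d` is `u` with the values at two interior positions exchanged, unless
`b < d`: then position `c` carries `u d`, and the edge conditions for `(c, d)` settle that case. -/
lemma IsBruhatEdge.of_mul_swap (hac : a < c) (hcb : c < b) (hcd : c < d) (hdb : d ≠ b)
    (hp : IsBruhatEdge u c d ∨ IsQuantumEdge u c d) (h : IsBruhatEdge (u * swap c d) a b) :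
    IsBruhatEdge u a b := by
  obtain ⟨hlt, hnone⟩ := h
  have ha : (u * swap c d) a = u a :=
    congrArg u (swap_apply_of_ne_of_ne hac.ne (hac.trans hcd).ne)
  have hb : (u * swap c d) b = u b :=
    congrArg u (swap_apply_of_ne_of_ne hcb.ne' hdb.symm)
  rw [ha, hb] at hlt hnone
  refine ⟨hlt, fun x hax hxb hbetween => ?_⟩
  rcases swap_mem_Ioo_or hac hcb hcd hdb hax hxb with ⟨h1, h2⟩ | ⟨rfl, hbd⟩
  · exact hnone _ h1 h2 (by simpa [Perm.mul_apply] using hbetween)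
  · have hd := hnone x hax hxb
    simp only [Perm.mul_apply, swap_apply_left] at hd
    rcases hp with ⟨hcd', hnone'⟩ | ⟨hdc, hall⟩
    · have hdb : u d < u b := lt_of_le_of_ne
        (not_lt.mp fun h => hnone' b hcb hbd ⟨hbetween.2, h⟩) (u.injective.ne hbd.ne')
      exact hd ⟨hbetween.1.trans hcd', hdb⟩
    · exact (hall b hcb hbd).2.not_gt hbetween.2

lemma IsQuantumEdge.of_mul_swap (hac : a < c) (hcb : c < b) (hcd : c < d) (hdb : d ≠ b)
    (hp : IsBruhatEdge u c d ∨ IsQuantumEdge u c d) (h : IsQuantumEdge (u * swap c d) a b) :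
    IsQuantumEdge u a b := by
  obtain ⟨hlt, hall⟩ := h
  have ha : (u * swap c d) a = u a :=
    congrArg u (swap_apply_of_ne_of_ne hac.ne (hac.trans hcd).ne)
  have hb : (u * swap c d) b = u b :=
    congrArg u (swap_apply_of_ne_of_ne hcb.ne' hdb.symm)
  rw [ha, hb] at hlt hall
  refine ⟨hlt, fun x hax hxb => ?_⟩
  rcases swap_mem_Ioo_or hac hcb hcd hdb hax hxb with ⟨h1, h2⟩ | ⟨rfl, hbd⟩
  · simpa [Perm.mul_apply] using hall _ h1 h2
  · have hd := hall x hax hxb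
    simp only [Perm.mul_apply, swap_apply_left] at hd
    rcases hp with ⟨hcd', hnone'⟩ | ⟨hdc, hall'⟩
    · have hbx : u b < u x := lt_of_le_of_ne
        (not_lt.mp fun h => hnone' b hcb hbd ⟨h, hd.1⟩) (u.injective.ne hcb.ne')
      exact ⟨hbx, hcd'.trans hd.2⟩
    · exact absurd (hall' b hcb hbd).1 hd.1.not_gt

end transfer

/-- Whether `p` is an edge at `u`, and its weight, depend only on this number. -/
def lenChange (u : Perm (Fin n)) (p : Fin n × Fin n) : ℤ :=
  len n (step n u p) - len n u

section lenChange

variable {u w : Perm (Fin n)} {p q : Fin n × Fin n}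

lemma isQBEdge_iff_lenChange :
    isQBEdge n u p ↔
      p.1 < p.2 ∧ (lenChange u p = 1 ∨ lenChange u p = 1 - 2 * ((p.2 : ℤ) - p.1)) := by
  unfold isQBEdge lenChange
  refine and_congr_right fun h => ?_
  have : (p.1 : ℕ) < p.2 := h
  omega

lemma edgeWeight_eq_ite (u : Perm (Fin n)) (p : Fin n × Fin n) :
    edgeWeight n u p = if lenChange u p = 1 then 0
      else fun k : Fin (n - 1) =>
        if (p.1 : ℕ) ≤ (k : ℕ) ∧ (k : ℕ) < (p.2 : ℕ) then (1 : ℤ) else 0 := by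
  unfold edgeWeight lenChange
  congr 1
  simp only [eq_iff_iff]
  omega

lemma isQBEdge_congr (h : lenChange u p = lenChange w p) : isQBEdge n u p ↔ isQBEdge n w p := by
  rw [isQBEdge_iff_lenChange, isQBEdge_iff_lenChange, h]

lemma edgeWeight_congr (h : lenChange u p = lenChange w p) :
    edgeWeight n u p = edgeWeight n w p := by
  rw [edgeWeight_eq_ite, edgeWeight_eq_ite, h]

lemma lenChange_eq_one_iff (hp : p.1 < p.2) : lenChange u p = 1 ↔ IsBruhatEdge u p.1 p.2 := by
  rw [← len_mul_swap_eq_add_one_iff hp, lenChange, step]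
  omega

lemma lenChange_eq_iff_isQuantumEdge (hp : p.1 < p.2) :
    lenChange u p = 1 - 2 * ((p.2 : ℤ) - p.1) ↔ IsQuantumEdge u p.1 p.2 := by
  rw [← len_mul_swap_add_eq_iff hp, lenChange, step]
  have : (p.1 : ℕ) < p.2 := hp
  omega

lemma isQBEdge_iff :
    isQBEdge n u p ↔ p.1 < p.2 ∧ (IsBruhatEdge u p.1 p.2 ∨ IsQuantumEdge u p.1 p.2) := by
  rw [isQBEdge_iff_lenChange]
  exact and_congr_right fun hp =>
    or_congr (lenChange_eq_one_iff hp) (lenChange_eq_iff_isQuantumEdge hp)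

lemma lenChange_step_of_lt (hqp : q.1 < p.1) (hpq : p.1 < q.2) (hb : p.2 ≠ q.2)
    (hup : isQBEdge n u p) (hq : isQBEdge n (step n u p) q) :
    lenChange (step n u p) q = lenChange u q := by
  obtain ⟨hp, hp'⟩ := isQBEdge_iff.mp hup
  obtain ⟨hq, hq'⟩ := isQBEdge_iff_lenChange.mp hq
  rcases hq' with h | h <;> rw [h, eq_comm]
  · exact (lenChange_eq_one_iff hq).mpr <|
      ((lenChange_eq_one_iff hq).mp h).of_mul_swap hqp hpq hp hb hp'
  · exact (lenChange_eq_iff_isQuantumEdge hq).mpr <|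
      ((lenChange_eq_iff_isQuantumEdge hq).mp h).of_mul_swap hqp hpq hp hb hp'

lemma commute_edges (hqp : q.1 < p.1) (hpq : p.1 < q.2) (hb : p.2 ≠ q.2)
    (hup : isQBEdge n u p) (hq : isQBEdge n (step n u p) q) :
    isQBEdge n u q ∧ isQBEdge n (step n u q) p ∧
      step n (step n u q) p = step n (step n u p) q ∧
      edgeWeight n u q + edgeWeight n (step n u q) p =
        edgeWeight n u p + edgeWeight n (step n u p) q := by
  have hp := (isQBEdge_iff.mp hup).1
  have hdisj : Perm.Disjoint (swap q.1 q.2) (swap p.1 p.2) := by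
    refine Perm.disjoint_swap_swap ?_
    simp only [List.nodup_cons, List.mem_cons, List.not_mem_nil, or_false, List.nodup_nil,
      not_false_eq_true, and_true, Fin.ext_iff]
    simp only [Fin.lt_def, ne_eq, Fin.ext_iff] at hqp hpq hp hb
    omega
  have hstep : step n (step n u q) p = step n (step n u p) q := by
    simp only [step, mul_assoc, hdisj.commute.eq]
  have hq_eq := lenChange_step_of_lt hqp hpq hb hup hq
  have hp_eq : lenChange (step n u q) p = lenChange u p := by
    unfold lenChange at hq_eq ⊢
    rw [hstep]
    linarith
  refine ⟨(isQBEdge_congr hq_eq).mp hq, (isQBEdge_congr hp_eq).mpr hup, hstep, ?_⟩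
  rw [edgeWeight_congr hq_eq, edgeWeight_congr hp_eq, add_comm]

end lenChange

/-- The labels `(a, b)` of an admissible path, each paired with its key `k`. -/
def ValidKeys (M : List (ℕ × (Fin n × Fin n))) : Prop :=
  (∀ m ∈ M, (m.2.1 : ℕ) ≤ m.1 ∧ m.1 < m.2.2) ∧ (M.map fun m => (m.1, m.2.2)).Nodup

lemma ValidKeys.sublist {M M' : List (ℕ × (Fin n × Fin n))} (hM : ValidKeys M)
    (h : M'.Sublist M) :
    ValidKeys M' :=
  ⟨fun m hm => hM.1 m (h.subset hm), hM.2.sublist (h.map _)⟩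

lemma ValidKeys.perm {M M' : List (ℕ × (Fin n × Fin n))} (hM : ValidKeys M) (h : M'.Perm M) :
    ValidKeys M' :=
  ⟨fun m hm => hM.1 m (h.subset hm), (h.map _).nodup_iff.mpr hM.2⟩

def KeyLE (x y : ℕ × (Fin n × Fin n)) : Prop :=
  toLex (x.1, x.2.1) ≤ toLex (y.1, y.2.1)

instance : DecidableRel (KeyLE (n := n)) := fun _ _ => inferInstanceAs (Decidable (_ ≤ _))

instance : Std.Total (KeyLE (n := n)) := ⟨fun _ _ => le_total _ _⟩

instance : IsTrans _ (KeyLE (n := n)) := ⟨fun _ _ _ => le_trans⟩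

lemma pathWeight_cons (u : Perm (Fin n)) (p : Fin n × Fin n) (L : List (Fin n × Fin n)) :
    pathWeight n u (p :: L) = edgeWeight n u p + pathWeight n (step n u p) L := rfl

lemma isPath_orderedInsert (x : ℕ × (Fin n × Fin n)) (l : List (ℕ × (Fin n × Fin n)))
    (hvalid : ValidKeys (x :: l)) (hkey : ∀ y ∈ l, x.1 ≤ y.1) {u v : Perm (Fin n)}
    (h : isPath n u ((x :: l).map Prod.snd) v) :
    isPath n u ((l.orderedInsert KeyLE x).map Prod.snd) v ∧
      pathWeight n u ((l.orderedInsert KeyLE x).map Prod.snd) =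
        pathWeight n u ((x :: l).map Prod.snd) := by
  induction l generalizing u with
  | nil => exact ⟨h, rfl⟩
  | cons y l ih =>
    by_cases hxy : KeyLE x y
    · rw [List.orderedInsert_cons_of_le _ _ hxy]
      exact ⟨h, rfl⟩
    rw [List.orderedInsert_of_not_le _ _ hxy]
    obtain hlt | ⟨hk, hay⟩ : y.1 < x.1 ∨ y.1 = x.1 ∧ y.2.1 < x.2.1 :=
      Prod.Lex.toLex_lt_toLex.mp (not_le.mp hxy)
    · exact absurd (hkey y (by simp)) (not_le.mpr hlt)
    have hx := hvalid.1 x (by simp)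
    have hy := hvalid.1 y (by simp)
    have hb : x.2.2 ≠ y.2.2 := by
      intro hb
      have := (List.nodup_cons.mp hvalid.2).1
      simp [← hk, hb] at this
    obtain ⟨ex, ey, hrest⟩ := h
    obtain ⟨ey', ex', hstep, hweight⟩ :=
      commute_edges hay (Fin.lt_def.mpr (by omega)) hb ex ey
    have hvalid' : ValidKeys (x :: l) := hvalid.sublist (.cons_cons _ (.cons _ (.refl l)))
    obtain ⟨hpath, hw⟩ := ih hvalid' (fun z hz => hkey z (by simp [hz]))
      (u := step n u y.2) ⟨ex', hstep ▸ hrest⟩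
    refine ⟨⟨ey', hpath⟩, ?_⟩
    simp only [List.map_cons, pathWeight_cons] at hw ⊢
    rw [hw, hstep, ← add_assoc, hweight, add_assoc]

lemma isPath_insertionSort (M : List (ℕ × (Fin n × Fin n))) (hvalid : ValidKeys M)
    (hsorted : M.Pairwise fun x y => x.1 ≤ y.1) {u v : Perm (Fin n)}
    (h : isPath n u (M.map Prod.snd) v) :
    isPath n u ((M.insertionSort KeyLE).map Prod.snd) v ∧
      pathWeight n u ((M.insertionSort KeyLE).map Prod.snd) = pathWeight n u (M.map Prod.snd) := by
  induction M generalizing u with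
  | nil => exact ⟨h, rfl⟩
  | cons x M ih =>
    obtain ⟨hx, hsorted⟩ := List.pairwise_cons.mp hsorted
    obtain ⟨ex, hrest⟩ := h
    obtain ⟨hpath, hw⟩ := ih (hvalid.sublist (.cons _ (.refl M))) hsorted hrest
    have hperm : (x :: M.insertionSort KeyLE).Perm (x :: M) := (List.perm_insertionSort _ M).cons x
    obtain ⟨hpath', hw'⟩ := isPath_orderedInsert x _ (hvalid.perm hperm)
      (fun y hy => hx y ((List.perm_insertionSort _ M).subset hy)) (u := u) ⟨ex, hpath⟩
    refine ⟨hpath', ?_⟩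
    rw [List.insertionSort_cons, hw']
    simp only [List.map_cons, pathWeight_cons, hw]

def block (N : List (ℕ × (Fin n × Fin n))) (k : ℕ) : List (Fin n × Fin n) :=
  (N.filter (·.1 = k)).map Prod.snd

lemma yAdm_block {N : List (ℕ × (Fin n × Fin n))} (hvalid : ValidKeys N)
    (hsorted : N.Pairwise KeyLE) (k : Fin (n - 1)) : yAdm n k (block N k) := by
  have hkey : ∀ x ∈ N.filter (·.1 = (k : ℕ)), x.1 = k := fun x hx => by
    simpa using (List.mem_filter.mp hx).2
  have hvalid' := hvalid.sublist (List.filter_sublist (p := (·.1 = (k : ℕ))) (l := N))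
  refine ⟨?_, ?_, ?_⟩
  · rw [block, List.map_map]
    refine (List.pairwise_map.mpr ((hsorted.filter _).imp_of_mem fun hx hy hxy => ?_)).isChain
    rw [KeyLE, Prod.Lex.toLex_le_toLex, hkey _ hx, hkey _ hy] at hxy
    simpa using hxy
  · intro p hp
    obtain ⟨x, hx, rfl⟩ := List.mem_map.mp hp
    rw [← hkey x hx]
    exact hvalid'.1 x hx
  · have : (block N k).map Prod.snd =
        ((N.filter (·.1 = (k : ℕ))).map fun m => (m.1, m.2.2)).map Prod.snd := by
      simp [block]
    rw [this]
    refine hvalid'.2.map_on fun p hp q hq hpq => ?_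
    obtain ⟨x, hx, rfl⟩ := List.mem_map.mp hp
    obtain ⟨y, hy, rfl⟩ := List.mem_map.mp hq
    exact Prod.ext (by rw [hkey x hx, hkey y hy]) hpq

lemma length_le_of_yAdm {k : Fin (n - 1)} {L : List (Fin n × Fin n)} (h : yAdm n k L) :
    L.length ≤ n - 1 - k := by
  have hkn : (k : ℕ) < n := by omega
  have hsub : (L.map Prod.snd).toFinset ⊆ Ioi ⟨k, hkn⟩ := by
    intro b hb
    obtain ⟨p, hp, rfl⟩ := List.mem_map.mp (List.mem_toFinset.mp hb)
    exact mem_Ioi.mpr (Fin.lt_def.mpr (h.2.1 p hp).2)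
  have := card_le_card hsub
  rwa [List.toFinset_card_of_nodup h.2.2, List.length_map, Fin.card_Ioi] at this

lemma yBetaAdm_of_sorted {N : List (ℕ × (Fin n × Fin n))} (hvalid : ValidKeys N)
    (hsorted : N.Pairwise KeyLE) :
    yBetaAdm n (fun k => (block N k).length) (N.map Prod.snd) := by
  refine ⟨fun k => block N k, ?_, fun k => ⟨rfl, yAdm_block hvalid hsorted k⟩⟩
  have hkeys : N.Pairwise fun x y => x.1 ≤ y.1 :=
    hsorted.imp fun h => (Prod.Lex.toLex_le_toLex.mp h).elim le_of_lt (fun h => h.1.le)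
  have hall : N.filter (·.1 < n - 1) = N := List.filter_eq_self.mpr fun x hx => by
    have := hvalid.1 x hx
    simp only [decide_eq_true_eq]
    omega
  calc N.map Prod.snd
      = ((List.ofFn fun k : Fin (n - 1) => N.filter (·.1 = (k : ℕ))).flatten).map Prod.snd := by
        rw [List.flatten_ofFn_filter_eq_filter_lt _ hkeys, hall]
    _ = _ := by rw [List.map_flatten, List.map_ofFn]; rfl

lemma Adm.exists_validKeys {L : List (Fin n × Fin n)} (h : Adm n L) :
    ∃ M : List (ℕ × (Fin n × Fin n)), ValidKeys M ∧ (M.Pairwise fun x y => x.1 ≤ y.1) ∧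
      M.map Prod.snd = L := by
  obtain ⟨ks, hlen, hchain, hbounds, hnodup⟩ := h
  refine ⟨ks.zip L, ⟨hbounds, ?_⟩, ?_, List.map_snd_zip hlen.ge⟩
  · rw [List.zip_map_right] at hnodup
    exact hnodup
  · rw [← List.pairwise_map (f := Prod.fst), List.map_fst_zip hlen.le]
    exact List.isChain_iff_pairwise.mp hchain

end QuantumBruhatGraph

open QuantumBruhatGraph

-- `k : Fin (n - 1)` is 0-based, so the paper's bound `β_k ≤ n - k` reads `β k ≤ n - 1 - k`.
theorem admissible_reduces_to_yBeta_admissible_general (n : ℕ)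
    (u v : Equiv.Perm (Fin n)) (L : List (Fin n × Fin n)) (d : Fin (n - 1) → ℤ)
    (hpath : isPath n u L v) (hadm : Adm n L) (hw : pathWeight n u L = d) :
    ∃ (β : Fin (n - 1) → ℕ) (L' : List (Fin n × Fin n)),
      (∀ k : Fin (n - 1), β k ≤ n - 1 - (k : ℕ)) ∧
      isPath n u L' v ∧ yBetaAdm n β L' ∧ pathWeight n u L' = d := by
  obtain ⟨M, hvalid, hkeys, rfl⟩ := hadm.exists_validKeys
  obtain ⟨hpath', hw'⟩ := isPath_insertionSort M hvalid hkeys hpath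
  have hvalid' := hvalid.perm (List.perm_insertionSort KeyLE M)
  have hsorted := List.pairwise_insertionSort KeyLE M
  exact ⟨_, _, fun k => length_le_of_yAdm (yAdm_block hvalid' hsorted k), hpath',
    yBetaAdm_of_sorted hvalid' hsorted, hw' ▸ hw⟩

/-- If there is an admissible directed path in `Γ_n` from `u` to `v` of weight `d`,
then there are `β` with `β_k ≤ n - k` for all `k` and a `y^β`-admissible directed
path in `Γ_n` from `u` to `v` of the same weight `d`.
(`k : Fin (n-1)` is `0`-based: paper's `k` is `(k : ℕ) + 1`, so paper's `n - k`
is `n - 1 - (k : ℕ)`.) -/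
theorem admissible_reduces_to_yBeta_admissible (n : ℕ) (hn : 2 ≤ n)
    (u v : Equiv.Perm (Fin n)) (L : List (Fin n × Fin n)) (d : Fin (n - 1) → ℤ)
    (hpath : isPath n u L v) (hadm : Adm n L) (hw : pathWeight n u L = d) :
    ∃ (β : Fin (n - 1) → ℕ) (L' : List (Fin n × Fin n)),
      (∀ k : Fin (n - 1), β k ≤ n - 1 - (k : ℕ)) ∧
      isPath n u L' v ∧ yBetaAdm n β L' ∧ pathWeight n u L' = d :=
  admissible_reduces_to_yBeta_admissible_general n u v L d hpath hadm hw
end
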